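/- arXiv:2505.13924 — 3 statements merged into one kernel-verified Lean document; each statement's English description precedes it below -/
import Mathlib

section
/- Let λ > 0 and K = 1/λ. For every v ∈ U and q ∈ Q one has B_HVM((v,q),(v,q)) = (λ/2)‖v‖² + (K/2)‖Gq‖², and consequently B_HVM((v,q),(v,q)) ≥ α(‖v‖² + ‖Gq‖²) with α = min{λ, K}/2. Hence the HVM bilinear form is coercive with respect to the quantity ‖v‖² + ‖Gq‖². -/
open scoped RealInnerProductSpace

/-- Coercivity of the HVM (Masud–Hughes) bilinear form:
`B_HVM((v,q),(v,q)) = (λ/2)‖v‖² + (K/2)‖Gq‖² ≥ α(‖v‖² + ‖Gq‖²)` with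
`α = min{λ, K}/2`, where `K = 1/λ`. -/
theorem hvm_coercive
    {U Q S : Type*}
    [NormedAddCommGroup U] [InnerProductSpace ℝ U]
    [NormedAddCommGroup Q] [InnerProductSpace ℝ Q]
    [NormedAddCommGroup S] [InnerProductSpace ℝ S]
    (G : Q →ₗ[ℝ] U) (D : U →ₗ[ℝ] S) (J : Q →ₗ[ℝ] S)
    (lam K : ℝ) (hlam : 0 < lam) (hK : K = 1 / lam)
    (B : U × Q → U × Q → ℝ)
    (hB : ∀ u p v q, B (u, p) (v, q) =
      lam * ⟪u, v⟫ - ⟪D v, J p⟫ + ⟪D u, J q⟫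
        + (K / 2) * ⟪lam • u + G p, -(lam • v) + G q⟫) :
    ∀ v q,
      B (v, q) (v, q) = (lam / 2) * ‖v‖ ^ 2 + (K / 2) * ‖G q‖ ^ 2 ∧
      B (v, q) (v, q) ≥ (min lam K / 2) * (‖v‖ ^ 2 + ‖G q‖ ^ 2) := by
  intro v q
  have hne : lam ≠ 0 := ne_of_gt hlam
  have hinner : ⟪lam • v + G q, -(lam • v) + G q⟫ = ‖G q‖ ^ 2 - lam ^ 2 * ‖v‖ ^ 2 := by
    rw [inner_add_left, inner_add_right, inner_add_right, inner_neg_right, inner_neg_right,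
      inner_smul_left, inner_smul_left, inner_smul_right, inner_smul_right, real_inner_self_eq_norm_sq,
      real_inner_self_eq_norm_sq, real_inner_comm (G q) v]
    simp only [RCLike.star_def, starRingEnd_apply, star_trivial]
    ring
  have heq : B (v, q) (v, q) = (lam / 2) * ‖v‖ ^ 2 + (K / 2) * ‖G q‖ ^ 2 := by
    rw [hB, hinner, hK, real_inner_self_eq_norm_sq]
    field_simp
    ring
  refine ⟨heq, ?_⟩
  rw [heq]
  have hKpos : 0 < K := by rw [hK]; positivity
  have h1 : min lam K ≤ lam := min_le_left _ _
  have h2 : min lam K ≤ K := min_le_right _ _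
  have hv : (0:ℝ) ≤ ‖v‖ ^ 2 := sq_nonneg _
  have hg : (0:ℝ) ≤ ‖G q‖ ^ 2 := sq_nonneg _
  nlinarith
end

section
/- Let λ > 0 and K = 1/λ. For every u ∈ U and p ∈ Q one has the identity B_GLS1((u,p),(u,−p)) = (λ/2)‖u‖² + (K/2)‖Gp‖². -/
open scoped RealInnerProductSpace

theorem real_inner_add_sub_eq_norm_sq_sub_norm_sq {F : Type*} [NormedAddCommGroup F]
    [InnerProductSpace ℝ F] (x y : F) : ⟪x + y, x - y⟫ = ‖x‖ ^ 2 - ‖y‖ ^ 2 := by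
  rw [inner_add_left, inner_sub_right, inner_sub_right, real_inner_comm x y,
    real_inner_self_eq_norm_sq, real_inner_self_eq_norm_sq]
  ring

/-- For the GLS1 bilinear form with `λ > 0` and `K = 1/λ`, one has
`B_GLS1((u,p),(u,−p)) = (λ/2)‖u‖² + (K/2)‖Gp‖²`. -/
theorem gls1_identity
    {U Q : Type*}
    [NormedAddCommGroup U] [InnerProductSpace ℝ U]
    [NormedAddCommGroup Q] [InnerProductSpace ℝ Q]
    (G : Q →ₗ[ℝ] U)
    (lam K : ℝ) (hlam : 0 < lam) (hK : K = 1 / lam)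
    (B : U × Q → U × Q → ℝ)
    (hB : ∀ u p v q, B (u, p) (v, q) =
      lam * ⟪u, v⟫ + ⟪v, G p⟫ + ⟪u, G q⟫
        - (K / 2) * ⟪lam • u + G p, lam • v + G q⟫) :
    ∀ u p, B (u, p) (u, -p) = (lam / 2) * ‖u‖ ^ 2 + (K / 2) * ‖G p‖ ^ 2 := by
  intro u p
  have hKlam : K * lam = 1 := by rw [hK, one_div_mul_cancel hlam.ne']
  -- the coupling terms ⟪u, Gp⟫ and ⟪u, G(-p)⟫ cancel, leaving a difference of squares
  have hB_diag : B (u, p) (u, -p) = lam * ‖u‖ ^ 2 - (K / 2) * (lam ^ 2 * ‖u‖ ^ 2 - ‖G p‖ ^ 2) := by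
    rw [hB, map_neg, ← sub_eq_add_neg, real_inner_add_sub_eq_norm_sq_sub_norm_sq, norm_smul,
      inner_neg_right, real_inner_self_eq_norm_sq, Real.norm_eq_abs, abs_of_pos hlam]
    ring
  rw [hB_diag]
  linear_combination (-(lam * ‖u‖ ^ 2) / 2) * hKlam
end

section
/- Let λ > 0 and K = 1/λ, and set α = min{λ, K}/2. For every (u,p) ∈ U × Q there exists (v,q) ∈ U × Q (namely (v,q) = (u,−p)) such that ‖v‖² + ‖Gq‖² = ‖u‖² + ‖Gp‖² and |B_GLS1((u,p),(v,q))| ≥ α(‖u‖² + ‖Gp‖²). In particular, for every (u,p) with ‖u‖² + ‖Gp‖² ≠ 0, sup over (v,q) with ‖v‖² + ‖Gq‖² ≠ 0 of |B_GLS1((u,p),(v,q))| / (‖v‖² + ‖Gq‖²)^{1/2} is at least α(‖u‖² + ‖Gp‖²)^{1/2}, i.e., B_GLS1 satisfies the Babuška inf–sup stability condition with constant α = min{λ,K}/2 with respect to the quantity (‖v‖² + ‖Gq‖²)^{1/2}. -/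
open scoped RealInnerProductSpace

/-- Babuška inf–sup stability of the GLS1 bilinear form with
constant `α = min{λ, K}/2`, `K = 1/λ`: for every `(u,p)` there exists `(v,q)`
(namely `(u, −p)`) with `‖v‖² + ‖Gq‖² = ‖u‖² + ‖Gp‖²` and
`|B_GLS1((u,p),(v,q))| ≥ α(‖u‖² + ‖Gp‖²)`; in particular whenever
`‖u‖² + ‖Gp‖² ≠ 0` there is `(v,q)` with `‖v‖² + ‖Gq‖² ≠ 0` and
`|B_GLS1((u,p),(v,q))| / (‖v‖² + ‖Gq‖²)^{1/2} ≥ α (‖u‖² + ‖Gp‖²)^{1/2}`. -/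
theorem gls1_infsup
    {U Q : Type*}
    [NormedAddCommGroup U] [InnerProductSpace ℝ U]
    [NormedAddCommGroup Q] [InnerProductSpace ℝ Q]
    (G : Q →ₗ[ℝ] U)
    (lam K : ℝ) (hlam : 0 < lam) (hK : K = 1 / lam)
    (alpha : ℝ) (halpha : alpha = min lam K / 2)
    (B : U × Q → U × Q → ℝ)
    (hB : ∀ u p v q, B (u, p) (v, q) =
      lam * ⟪u, v⟫ + ⟪v, G p⟫ + ⟪u, G q⟫
        - (K / 2) * ⟪lam • u + G p, lam • v + G q⟫) :
    (∀ u p, ∃ v q, (v, q) = (u, -p) ∧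
        ‖v‖ ^ 2 + ‖G q‖ ^ 2 = ‖u‖ ^ 2 + ‖G p‖ ^ 2 ∧
        |B (u, p) (v, q)| ≥ alpha * (‖u‖ ^ 2 + ‖G p‖ ^ 2)) ∧
    (∀ u p, ‖u‖ ^ 2 + ‖G p‖ ^ 2 ≠ 0 →
      ∃ v q, ‖v‖ ^ 2 + ‖G q‖ ^ 2 ≠ 0 ∧
        |B (u, p) (v, q)| / Real.sqrt (‖v‖ ^ 2 + ‖G q‖ ^ 2)
          ≥ alpha * Real.sqrt (‖u‖ ^ 2 + ‖G p‖ ^ 2)) := by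
  have hKpos : 0 < K := by rw [hK]; positivity
  have key : ∀ (u : U) (p : Q),
      B (u, p) (u, -p) = lam / 2 * ‖u‖ ^ 2 + K / 2 * ‖G p‖ ^ 2 := by
    intro u p
    rw [hB]
    have h1 : ⟪lam • u + G p, lam • u + G (-p)⟫ =
        lam * lam * ‖u‖ ^ 2 - ‖G p‖ ^ 2 := by
      simp only [map_neg, inner_add_left, inner_add_right,
        inner_smul_left, inner_smul_right, inner_neg_right,
        real_inner_self_eq_norm_sq, real_inner_comm (G p) u,
        RCLike.star_def, starRingEnd_apply, star_trivial]
      ring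
    rw [h1]
    have h2 : ⟪u, G (-p)⟫ = -⟪u, G p⟫ := by simp
    rw [h2, real_inner_self_eq_norm_sq]
    have hlamne : lam ≠ 0 := ne_of_gt hlam
    rw [hK]
    field_simp
    ring
  have habs : ∀ (u : U) (p : Q),
      |B (u, p) (u, -p)| ≥ alpha * (‖u‖ ^ 2 + ‖G p‖ ^ 2) := by
    intro u p
    rw [key]
    have h1 : 0 ≤ lam / 2 * ‖u‖ ^ 2 + K / 2 * ‖G p‖ ^ 2 := by positivity
    rw [abs_of_nonneg h1]
    have h2 : alpha ≤ lam / 2 := by rw [halpha]; have := min_le_left lam K; linarith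
    have h3 : alpha ≤ K / 2 := by rw [halpha]; have := min_le_right lam K; linarith
    nlinarith [sq_nonneg ‖u‖, sq_nonneg ‖G p‖]
  constructor
  · intro u p
    exact ⟨u, -p, rfl, by simp, habs u p⟩
  · intro u p hne
    refine ⟨u, -p, by simpa using hne, ?_⟩
    have hs : 0 < ‖u‖ ^ 2 + ‖G p‖ ^ 2 := by
      rcases lt_or_eq_of_le (by positivity : (0:ℝ) ≤ ‖u‖ ^ 2 + ‖G p‖ ^ 2) with h | h
      · exact h
      · exact absurd h.symm hne
    have hsq : 0 < Real.sqrt (‖u‖ ^ 2 + ‖G p‖ ^ 2) := Real.sqrt_pos.mpr hs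
    have heq : ‖u‖ ^ 2 + ‖G (-p)‖ ^ 2 = ‖u‖ ^ 2 + ‖G p‖ ^ 2 := by simp
    rw [heq, ge_iff_le, le_div_iff₀ hsq]
    have := habs u p
    calc alpha * Real.sqrt (‖u‖ ^ 2 + ‖G p‖ ^ 2) * Real.sqrt (‖u‖ ^ 2 + ‖G p‖ ^ 2)
        = alpha * (‖u‖ ^ 2 + ‖G p‖ ^ 2) := by
          rw [mul_assoc, Real.mul_self_sqrt hs.le]
      _ ≤ |B (u, p) (u, -p)| := this
end
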